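/- The map Φ₄(A,B) = tr(A+B) − 2 tr exp((log A + log B)/2) on pairs of positive definite matrices satisfies Φ₄(A,B) ≥ 0 with equality if and only if A = B. -/

import Mathlib

open scoped ComplexOrder
open MeasureTheory

/-- The positive semidefinite square root of a matrix (zero if not positive semidefinite). -/
noncomputable def msqrt {N : ℕ} (A : Matrix (Fin N) (Fin N) ℂ) : Matrix (Fin N) (Fin N) ℂ :=
  by classical exact if h : A.PosSemidef then
    (h.1.eigenvectorUnitary : Matrix (Fin N) (Fin N) ℂ) *
      Matrix.diagonal (fun i => ((Real.sqrt (h.1.eigenvalues i) : ℝ) : ℂ)) *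
      (star h.1.eigenvectorUnitary : Matrix (Fin N) (Fin N) ℂ) else 0

/-- The Pusz–Woronowicz geometric mean `A # B = A^{1/2} (A^{-1/2} B A^{-1/2})^{1/2} A^{1/2}`. -/
noncomputable def geom {N : ℕ} (A B : Matrix (Fin N) (Fin N) ℂ) : Matrix (Fin N) (Fin N) ℂ :=
  msqrt A * msqrt ((msqrt A)⁻¹ * B * (msqrt A)⁻¹) * msqrt A

/-- The logarithm of a Hermitian matrix, via the spectral theorem (zero if not Hermitian). -/
noncomputable def mlog {N : ℕ} (A : Matrix (Fin N) (Fin N) ℂ) : Matrix (Fin N) (Fin N) ℂ :=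
  by classical exact if h : A.IsHermitian then h.cfc Real.log else 0

/-- The log Euclidean mean `exp((log A + log B)/2)`. -/
noncomputable def logEuclid {N : ℕ} (A B : Matrix (Fin N) (Fin N) ℂ) : Matrix (Fin N) (Fin N) ℂ :=
  NormedSpace.exp ((2:ℂ)⁻¹ • (mlog A + mlog B))

/-!
Let `V` be a unitary diagonalising `H = (log A + log B) / 2`, with eigenvalues `ν`. Write
`P = V⋆ W`, where `W` diagonalises `log A` with eigenvalues `log λⱼ`. The `i`-th diagonal
entries of `V⋆ (log A) V` and `V⋆ A V` are the averages `xᵢ = ∑ⱼ |Pᵢⱼ|² log λⱼ` and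
`aᵢ = ∑ⱼ |Pᵢⱼ|² λⱼ` for the same probability weights, so Jensen gives `exp xᵢ ≤ aᵢ`; likewise
`exp yᵢ ≤ bᵢ`, and `νᵢ = (xᵢ + yᵢ) / 2`. Hence
`tr (A + B) - 2 tr exp H = ∑ᵢ (aᵢ + bᵢ - 2 exp νᵢ) ≥ ∑ᵢ (exp (xᵢ / 2) - exp (yᵢ / 2))² ≥ 0`.
If equality holds then `xᵢ = yᵢ`, and strict convexity of `exp` makes each column `V eᵢ` an
eigenvector of both `log A` and `log B` with eigenvalue `xᵢ`; so `log A = log B` and `A = B`.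
-/

open Matrix Finset

lemma Real.exp_add_exp_sub_two_mul_exp_add_div_two (x y : ℝ) :
    Real.exp x + Real.exp y - 2 * Real.exp ((x + y) / 2) =
      (Real.exp (x / 2) - Real.exp (y / 2)) ^ 2 := by
  have hsq (z : ℝ) : Real.exp z = Real.exp (z / 2) ^ 2 := by rw [sq, ← Real.exp_add, add_halves]
  rw [hsq x, hsq y, add_div, Real.exp_add]
  ring

namespace Matrix

variable {n : Type*} [Fintype n] [DecidableEq n]

lemma mul_diagonal_mul_star_apply {α : Type*} [CommSemiring α] [StarRing α]
    (P : Matrix n n α) (d : n → α) (k i : n) :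
    (P * diagonal d * star P) k i = ∑ j, P k j * d j * star (P i j) := by
  rw [mul_apply]
  simp only [mul_diagonal, star_apply]

lemma sum_normSq_apply_eq_one {P : Matrix n n ℂ} (hP : P ∈ unitaryGroup n ℂ) (i : n) :
    ∑ j, Complex.normSq (P i j) = 1 := by
  have h := congr_fun₂ (mem_unitaryGroup_iff.mp hP) i i
  simp only [mul_apply, star_apply, one_apply_eq, RCLike.star_def, Complex.mul_conj] at h
  exact_mod_cast h

lemma eq_of_star_mul_mul_eq {V X Y : Matrix n n ℂ} (hV : V ∈ unitaryGroup n ℂ)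
    (h : star V * X * V = star V * Y * V) : X = Y :=
  EquivLike.injective (Unitary.conjStarAlgAut ℂ _ (star ⟨V, hV⟩)) <| by
    rwa [Unitary.conjStarAlgAut_star_apply, Unitary.conjStarAlgAut_star_apply]

lemma trace_eq_sum_re_star_mul_mul_apply_self {X V : Matrix n n ℂ} (hX : X.IsHermitian)
    (hV : V ∈ unitaryGroup n ℂ) : X.trace = ↑(∑ i, ((star V * X * V) i i).re) := by
  have hconj : (star V * X * V).IsHermitian := isHermitian_conjTranspose_mul_mul V hX
  conv_lhs => rw [← Matrix.one_mul X, ← mem_unitaryGroup_iff.mp hV, ← trace_mul_cycle]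
  push_cast
  exact sum_congr rfl fun i _ => (hconj.coe_re_apply_self i).symm

namespace IsHermitian

variable {X : Matrix n n ℂ} (hX : X.IsHermitian)
include hX

lemma star_mul_cfc_mul_apply (V : Matrix n n ℂ) (f : ℝ → ℝ) (k i : n) :
    (star V * cfc f X * V) k i = ∑ j, (star V * hX.eigenvectorUnitary) k j *
      f (hX.eigenvalues j) * star ((star V * hX.eigenvectorUnitary) i j) := by
  have : star V * cfc f X * V = (star V * hX.eigenvectorUnitary) *
      diagonal (Complex.ofReal ∘ f ∘ hX.eigenvalues) * star (star V * hX.eigenvectorUnitary) := by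
    rw [hX.cfc_eq, IsHermitian.cfc, Unitary.conjStarAlgAut_apply, star_mul, star_star]
    simp only [Matrix.mul_assoc]
    rfl
  rw [this, mul_diagonal_mul_star_apply]
  rfl

lemma re_star_mul_cfc_mul_apply_self (V : Matrix n n ℂ) (f : ℝ → ℝ) (i : n) :
    ((star V * cfc f X * V) i i).re =
      ∑ j, Complex.normSq ((star V * hX.eigenvectorUnitary) i j) * f (hX.eigenvalues j) := by
  rw [hX.star_mul_cfc_mul_apply, Complex.re_sum]
  refine sum_congr rfl fun j _ => ?_
  rw [mul_right_comm, RCLike.star_def, Complex.mul_conj, ← Complex.ofReal_mul, Complex.ofReal_re]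

lemma re_star_eigenvectorUnitary_mul_cfc_mul_apply_self (f : ℝ → ℝ) (i : n) :
    ((star (hX.eigenvectorUnitary : Matrix n n ℂ) * cfc f X * hX.eigenvectorUnitary) i i).re =
      f (hX.eigenvalues i) := by
  rw [hX.re_star_mul_cfc_mul_apply_self, Unitary.coe_star_mul_self]
  simp [one_apply]

lemma re_star_eigenvectorUnitary_mul_mul_apply_self (i : n) :
    ((star (hX.eigenvectorUnitary : Matrix n n ℂ) * X * hX.eigenvectorUnitary) i i).re =
      hX.eigenvalues i := by
  rw [← Unitary.conjStarAlgAut_star_apply (S := ℂ), hX.conjStarAlgAut_star_eigenvectorUnitary]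
  simp

lemma exp_eq_cfc : NormedSpace.exp X = cfc Real.exp X := by
  have hinv : (hX.eigenvectorUnitary : Matrix n n ℂ)⁻¹ =
      star (hX.eigenvectorUnitary : Matrix n n ℂ) :=
    inv_eq_left_inv (Unitary.coe_star_mul_self _)
  rw [hX.cfc_eq, IsHermitian.cfc, Unitary.conjStarAlgAut_apply]
  conv_lhs => rw [hX.spectral_theorem, Unitary.conjStarAlgAut_apply]
  rw [← hinv, exp_conj _ _ Unitary.isUnit_coe, exp_diagonal]
  congr 3
  funext j
  simp [Complex.ofReal_exp, ← Complex.exp_eq_exp_ℂ]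

variable {V : Matrix n n ℂ} (hV : V ∈ unitaryGroup n ℂ)
include hV

lemma map_re_star_mul_mul_apply_self_le {f : ℝ → ℝ} (hf : ConvexOn ℝ Set.univ f) (i : n) :
    f ((star V * X * V) i i).re ≤ ((star V * cfc f X * V) i i).re := by
  conv_lhs => rw [← cfc_id' ℝ X]
  rw [hX.re_star_mul_cfc_mul_apply_self, hX.re_star_mul_cfc_mul_apply_self]
  simpa using hf.map_sum_le (fun j _ => Complex.normSq_nonneg _)
    (sum_normSq_apply_eq_one (mul_mem (Unitary.star_mem hV) hX.eigenvectorUnitary.2) i)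
    (fun j _ => Set.mem_univ _)

lemma star_mul_mul_apply_eq_zero_of_map_re_eq {f : ℝ → ℝ} (hf : StrictConvexOn ℝ Set.univ f)
    {i : n} (heq : f ((star V * X * V) i i).re = ((star V * cfc f X * V) i i).re)
    {k : n} (hki : k ≠ i) : (star V * X * V) k i = 0 := by
  set P := star V * (hX.eigenvectorUnitary : Matrix n n ℂ) with hP_def
  have hP : P ∈ unitaryGroup n ℂ := mul_mem (Unitary.star_mem hV) hX.eigenvectorUnitary.2
  set t := ∑ j, Complex.normSq (P i j) * hX.eigenvalues j
  have hconst : ∀ j, P i j ≠ 0 → hX.eigenvalues j = t := by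
    conv at heq => lhs; rw [← cfc_id' ℝ X]
    rw [hX.re_star_mul_cfc_mul_apply_self, hX.re_star_mul_cfc_mul_apply_self] at heq
    have := (hf.map_sum_eq_iff' (fun j _ => Complex.normSq_nonneg _)
      (sum_normSq_apply_eq_one hP i) (fun j _ => Set.mem_univ _)).mp (by simpa using heq)
    intro j hj
    simpa using this j (mem_univ j) (by simpa using hj)
  calc (star V * X * V) k i = ∑ j, P k j * t * star (P i j) := by
        rw [← cfc_id' ℝ X, hX.star_mul_cfc_mul_apply, ← hP_def]
        refine sum_congr rfl fun j _ => ?_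
        by_cases hj : P i j = 0
        · simp only [hj, star_zero, mul_zero]
        · rw [hconst j hj]
    _ = t * (P * star P) k i := by
        rw [mul_apply, mul_sum]
        exact sum_congr rfl fun j _ => by rw [star_apply]; ring
    _ = 0 := by rw [mem_unitaryGroup_iff.mp hP, one_apply_ne hki, mul_zero]

end IsHermitian
end Matrix

section LogEuclid

variable {N : ℕ} {A B : Matrix (Fin N) (Fin N) ℂ}

lemma isHermitian_mlog (A : Matrix (Fin N) (Fin N) ℂ) : (mlog A).IsHermitian := by
  unfold mlog
  split_ifs with h
  · exact h.cfc_eq Real.log ▸ cfc_predicate Real.log A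
  · exact isHermitian_zero

lemma Matrix.IsHermitian.mlog_eq_cfc (hA : A.IsHermitian) : mlog A = cfc Real.log A := by
  rw [mlog, dif_pos hA, hA.cfc_eq]

lemma Matrix.PosDef.cfc_exp_mlog (hA : A.PosDef) : cfc Real.exp (mlog A) = A := by
  have hpos : ∀ x ∈ spectrum ℝ A, 0 < x := by
    rw [hA.1.spectrum_real_eq_range_eigenvalues]
    rintro _ ⟨i, rfl⟩
    exact hA.eigenvalues_pos i
  rw [hA.1.mlog_eq_cfc]
  calc cfc Real.exp (cfc Real.log A) = cfc (fun x => Real.exp (Real.log x)) A :=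
        (cfc_comp' Real.exp Real.log A Real.continuous_exp.continuousOn
          (Real.continuousOn_log.mono fun x hx => (hpos x hx).ne') hA.1).symm
    _ = cfc (fun x => x) A := cfc_congr fun x hx => Real.exp_log (hpos x hx)
    _ = A := cfc_id' ℝ A hA.1

lemma Matrix.PosDef.logEuclid_self (hA : A.PosDef) : logEuclid A A = A := by
  rw [logEuclid, ← two_smul ℂ (mlog A), smul_smul, inv_mul_cancel₀ two_ne_zero, one_smul,
    (isHermitian_mlog A).exp_eq_cfc, hA.cfc_exp_mlog]

lemma Matrix.PosDef.exp_re_star_mul_mlog_mul_apply_self_le (hA : A.PosDef)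
    {V : Matrix (Fin N) (Fin N) ℂ} (hV : V ∈ unitaryGroup (Fin N) ℂ) (i : Fin N) :
    Real.exp ((star V * mlog A * V) i i).re ≤ ((star V * A * V) i i).re := by
  simpa only [hA.cfc_exp_mlog] using
    (isHermitian_mlog A).map_re_star_mul_mul_apply_self_le hV convexOn_exp i

lemma Matrix.PosDef.star_mul_mlog_mul_apply_eq_zero (hA : A.PosDef)
    {V : Matrix (Fin N) (Fin N) ℂ} (hV : V ∈ unitaryGroup (Fin N) ℂ) {i : Fin N}
    (heq : Real.exp ((star V * mlog A * V) i i).re = ((star V * A * V) i i).re)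
    {k : Fin N} (hki : k ≠ i) : (star V * mlog A * V) k i = 0 :=
  (isHermitian_mlog A).star_mul_mul_apply_eq_zero_of_map_re_eq hV strictConvexOn_exp
    (by rwa [hA.cfc_exp_mlog]) hki

/-- In an orthonormal eigenbasis `V` of `mlog A + mlog B`, the summands of
`tr (A + B) - 2 tr (logEuclid A B)`; see `trace_sub_two_mul_trace_logEuclid_eq_sum`. -/
noncomputable def logEuclidGap (A B V : Matrix (Fin N) (Fin N) ℂ) (i : Fin N) : ℝ :=
  ((star V * A * V) i i).re + ((star V * B * V) i i).re -
    2 * Real.exp ((((star V * mlog A * V) i i).re + ((star V * mlog B * V) i i).re) / 2)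

lemma trace_sub_two_mul_trace_logEuclid_eq_sum (hA : A.IsHermitian) (hB : B.IsHermitian) :
    ∃ V ∈ unitaryGroup (Fin N) ℂ,
      (A + B).trace - 2 * (logEuclid A B).trace = ↑(∑ i, logEuclidGap A B V i) := by
  set H := (2 : ℂ)⁻¹ • (mlog A + mlog B)
  have hH : H.IsHermitian :=
    ((isHermitian_mlog A).add (isHermitian_mlog B)).smul (by simp [IsSelfAdjoint])
  have hL : logEuclid A B = cfc Real.exp H := hH.exp_eq_cfc
  refine ⟨hH.eigenvectorUnitary, hH.eigenvectorUnitary.2, ?_⟩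
  rw [trace_add, trace_eq_sum_re_star_mul_mul_apply_self hA hH.eigenvectorUnitary.2,
    trace_eq_sum_re_star_mul_mul_apply_self hB hH.eigenvectorUnitary.2,
    trace_eq_sum_re_star_mul_mul_apply_self (hL ▸ cfc_predicate Real.exp H)
      hH.eigenvectorUnitary.2, hL]
  simp only [hH.re_star_eigenvectorUnitary_mul_cfc_mul_apply_self]
  set V : Matrix (Fin N) (Fin N) ℂ := ↑hH.eigenvectorUnitary
  have hmid : ∀ i, hH.eigenvalues i =
      (((star V * mlog A * V) i i).re + ((star V * mlog B * V) i i).re) / 2 := fun i => by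
    rw [← hH.re_star_eigenvectorUnitary_mul_mul_apply_self]
    change ((star V * ((2 : ℂ)⁻¹ • (mlog A + mlog B)) * V) i i).re = _
    rw [Matrix.mul_smul, Matrix.smul_mul, Matrix.smul_apply, smul_eq_mul, inv_mul_eq_div,
      Complex.div_ofNat_re, Matrix.mul_add, Matrix.add_mul, Matrix.add_apply, Complex.add_re]
  simp only [hmid, logEuclidGap, sum_sub_distrib, sum_add_distrib]
  push_cast [mul_sum]
  ring

lemma logEuclidGap_nonneg (hA : A.PosDef) (hB : B.PosDef) {V : Matrix (Fin N) (Fin N) ℂ}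
    (hV : V ∈ unitaryGroup (Fin N) ℂ) (i : Fin N) : 0 ≤ logEuclidGap A B V i := by
  have ha := hA.exp_re_star_mul_mlog_mul_apply_self_le hV i
  have hb := hB.exp_re_star_mul_mlog_mul_apply_self_le hV i
  have hmid := Real.exp_add_exp_sub_two_mul_exp_add_div_two
    ((star V * mlog A * V) i i).re ((star V * mlog B * V) i i).re
  rw [logEuclidGap]
  nlinarith [sq_nonneg (Real.exp (((star V * mlog A * V) i i).re / 2) -
    Real.exp (((star V * mlog B * V) i i).re / 2))]

lemma star_mul_mlog_mul_apply_eq_of_logEuclidGap_eq_zero (hA : A.PosDef) (hB : B.PosDef)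
    {V : Matrix (Fin N) (Fin N) ℂ} (hV : V ∈ unitaryGroup (Fin N) ℂ) {i : Fin N}
    (hgap : logEuclidGap A B V i = 0) (k : Fin N) :
    (star V * mlog A * V) k i = (star V * mlog B * V) k i := by
  have ha := hA.exp_re_star_mul_mlog_mul_apply_self_le hV i
  have hb := hB.exp_re_star_mul_mlog_mul_apply_self_le hV i
  set x := ((star V * mlog A * V) i i).re
  set y := ((star V * mlog B * V) i i).re
  have hmid := Real.exp_add_exp_sub_two_mul_exp_add_div_two x y
  rw [logEuclidGap] at hgap
  have hsq : (Real.exp (x / 2) - Real.exp (y / 2)) ^ 2 = 0 := by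
    nlinarith [sq_nonneg (Real.exp (x / 2) - Real.exp (y / 2))]
  have hxy : x = y := by
    simpa using Real.exp_injective (sub_eq_zero.mp (pow_eq_zero_iff two_ne_zero |>.mp hsq))
  obtain rfl | hki := eq_or_ne k i
  · have hX : (star V * mlog A * V).IsHermitian :=
      isHermitian_conjTranspose_mul_mul V (isHermitian_mlog A)
    have hY : (star V * mlog B * V).IsHermitian :=
      isHermitian_conjTranspose_mul_mul V (isHermitian_mlog B)
    rw [← hX.coe_re_apply_self, ← hY.coe_re_apply_self]
    exact congrArg _ hxy
  · rw [hA.star_mul_mlog_mul_apply_eq_zero hV (by linarith) hki,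
      hB.star_mul_mlog_mul_apply_eq_zero hV (by linarith) hki]

end LogEuclid

theorem stmt5 {N : ℕ} (A B : Matrix (Fin N) (Fin N) ℂ) (hA : A.PosDef) (hB : B.PosDef) :
    0 ≤ (A + B).trace - 2 * (logEuclid A B).trace ∧
    ((A + B).trace - 2 * (logEuclid A B).trace = 0 ↔ A = B) := by
  obtain ⟨V, hV, htrace⟩ := trace_sub_two_mul_trace_logEuclid_eq_sum hA.1 hB.1
  have hgap : ∀ i ∈ univ, 0 ≤ logEuclidGap A B V i :=
    fun i _ => logEuclidGap_nonneg hA hB hV i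
  refine ⟨htrace ▸ Complex.zero_le_real.mpr (sum_nonneg hgap), fun h => ?_, ?_⟩
  · rw [htrace, Complex.ofReal_eq_zero, sum_eq_zero_iff_of_nonneg hgap] at h
    have hlog : mlog A = mlog B := eq_of_star_mul_mul_eq hV <| ext fun k i =>
      star_mul_mlog_mul_apply_eq_of_logEuclidGap_eq_zero hA hB hV (h i (mem_univ i)) k
    rw [← hA.cfc_exp_mlog, ← hB.cfc_exp_mlog, hlog]
  · rintro rfl
    rw [hA.logEuclid_self, trace_add]
    ring
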